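/- arXiv:1906.07481 — 2 statements merged into one kernel-verified Lean document; each statement's English description precedes it below -/
import Mathlib

section
/- Let n ≥ 4 and let (π, V) be a real representation of the symmetric group S_n on a finite-dimensional real vector space. Then the multiplicity of −1 as an eigenvalue of π((1 2)(3 4)) is even; equivalently, χ_π(1) − χ_π((1 2)(3 4)) is divisible by 4, where χ_π(g) = trace(π(g)). -/
/-!
Write `σ = (1 2)(3 4)`, `τ = (1 3)(2 4)` and `γ = (3 4)`. The involution `τ` commutes with `σ`, so
it acts on the `(-1)`-eigenspace `W` of `σ` and splits it into its own `±1`-eigenspaces. The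
transposition `γ` commutes with `σ` and conjugates `τ` to `στ`, which acts on `W` as `-τ`; hence `γ`
exchanges the two eigenspaces of `τ` in `W`, and `dim W` is even. As `(1 - σ)/2` projects onto `W`,
`χ(1) - χ(σ) = 2 dim W`. All of this happens in a copy of `S₄`, where the relations are decidable.
-/

open Equiv Module Module.End

theorem Submodule.finrank_le_of_map_le_of_injective {K V W : Type*} [Field K] [AddCommGroup V]
    [Module K V] [AddCommGroup W] [Module K W] [FiniteDimensional K W] {f : V →ₗ[K] W}
    (hf : Function.Injective f) {P : Submodule K V} {Q : Submodule K W} (hPQ : P.map f ≤ Q) :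
    finrank K P ≤ finrank K Q :=
  (Submodule.equivMapOfInjective f hf P).finrank_eq.trans_le (Submodule.finrank_mono hPQ)

namespace Module.End

variable {K V : Type*} [Field K] [AddCommGroup V] [Module K V]

theorem finrank_eq_finrank_inf_eigenspace_one_add_neg_one [NeZero (2 : K)]
    [FiniteDimensional K V] {B : End K V} (hB : B * B = 1) {W : Submodule K V}
    (hW : ∀ v ∈ W, B v ∈ W) :
    finrank K W =
      finrank K ↥(W ⊓ B.eigenspace 1) + finrank K ↥(W ⊓ B.eigenspace (-1)) := by
  have hBB (v : V) : B (B v) = v := by rw [← mul_apply, hB, one_apply]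
  have hsup : W ⊓ B.eigenspace 1 ⊔ W ⊓ B.eigenspace (-1) = W := by
    refine le_antisymm (sup_le inf_le_left inf_le_left) fun v hv => ?_
    have hsplit : v = (2⁻¹ : K) • (v + B v) + (2⁻¹ : K) • (v - B v) := by
      rw [← smul_add, add_add_sub_cancel, ← two_smul K, smul_smul,
        inv_mul_cancel₀ two_ne_zero, one_smul]
    rw [hsplit]
    refine Submodule.add_mem_sup ⟨W.smul_mem _ (W.add_mem hv (hW v hv)), ?_⟩
      ⟨W.smul_mem _ (W.sub_mem hv (hW v hv)), ?_⟩
    · rw [SetLike.mem_coe, mem_eigenspace_iff, map_smul, map_add, hBB, add_comm, one_smul]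
    · rw [SetLike.mem_coe, mem_eigenspace_iff, map_smul, map_sub, hBB, neg_one_smul, ← smul_neg,
        neg_sub]
  have hinf : W ⊓ B.eigenspace 1 ⊓ (W ⊓ B.eigenspace (-1)) = ⊥ := by
    have : Disjoint (B.eigenspace 1) (B.eigenspace (-1)) :=
      B.eigenspaces_iSupIndep.pairwiseDisjoint fun h =>
        (two_ne_zero : (2 : K) ≠ 0) (by linear_combination h)
    exact (this.mono inf_le_right inf_le_right).eq_bot
  rw [← Submodule.finrank_sup_add_finrank_inf_eq, hsup, hinf, finrank_bot, add_zero]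

theorem map_inf_eigenspace_le {A B C : End K V} (hAC : Commute A C) (hBC : B * C = C * (A * B))
    (μ : K) :
    (A.eigenspace (-1) ⊓ B.eigenspace μ).map C ≤ A.eigenspace (-1) ⊓ B.eigenspace (-μ) := by
  rintro _ ⟨v, ⟨hAv, hBv⟩, rfl⟩
  rw [SetLike.mem_coe, mem_eigenspace_iff] at hAv hBv
  have hACv : A (C v) = -C v := by rw [← mul_apply, hAC.eq, mul_apply, hAv]; simp
  refine ⟨mem_eigenspace_iff.mpr (by rw [hACv, neg_one_smul]), mem_eigenspace_iff.mpr ?_⟩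
  rw [← mul_apply, hBC, mul_apply, mul_apply, hBv, map_smul, hAv, map_smul, map_smul]
  simp

theorem even_finrank_eigenspace_neg_one [NeZero (2 : K)] [FiniteDimensional K V]
    {A B C : End K V} (hB : B * B = 1) (hAB : Commute A B) (hC : Function.Injective C)
    (hAC : Commute A C) (hBC : B * C = C * (A * B)) : Even (finrank K (A.eigenspace (-1))) := by
  have hle := Submodule.finrank_le_of_map_le_of_injective hC (map_inf_eigenspace_le hAC hBC 1)
  have hge := Submodule.finrank_le_of_map_le_of_injective hC (map_inf_eigenspace_le hAC hBC (-1))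
  rw [neg_neg] at hge
  have := finrank_eq_finrank_inf_eigenspace_one_add_neg_one hB (W := A.eigenspace (-1))
    (fun v hv => mapsTo_genEigenspace_of_comm hAB (-1) 1 hv)
  exact ⟨finrank K ↥(A.eigenspace (-1) ⊓ B.eigenspace 1), by omega⟩

theorem isProj_eigenspace_neg_one [NeZero (2 : K)] {A : End K V} (hA : A * A = 1) :
    LinearMap.IsProj (A.eigenspace (-1)) ((2⁻¹ : K) • (1 - A)) := by
  constructor
  · intro x
    have h : A * ((2:K)⁻¹ • (1 - A)) = -((2:K)⁻¹ • (1 - A)) := by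
      rw [mul_smul_comm, mul_sub, mul_one, hA, ← smul_neg, neg_sub]
    rw [mem_eigenspace_iff, ← mul_apply, h, LinearMap.neg_apply, neg_one_smul]
  · intro x hx
    rw [mem_eigenspace_iff] at hx
    show (2:K)⁻¹ • (x - A x) = x
    rw [hx, neg_one_smul, sub_neg_eq_add, ← two_smul K x, smul_smul,
      inv_mul_cancel₀ two_ne_zero, one_smul]

theorem trace_one_sub_eq_two_mul_finrank_eigenspace_neg_one [NeZero (2 : K)]
    [FiniteDimensional K V] {A : End K V} (hA : A * A = 1) :
    LinearMap.trace K V 1 - LinearMap.trace K V A = 2 * finrank K (A.eigenspace (-1)) := by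
  have := (isProj_eigenspace_neg_one hA).trace
  rw [map_smul, map_sub, smul_eq_mul] at this
  rw [← this, ← mul_assoc, mul_inv_cancel₀ two_ne_zero, one_mul]

end Module.End

theorem Equiv.Perm.viaEmbeddingHom_swap {α β : Type*} [DecidableEq α] [DecidableEq β]
    (ι : α ↪ β) (x y : α) :
    Perm.viaEmbeddingHom ι (swap x y) = swap (ι x) (ι y) := by
  ext z
  by_cases hz : z ∈ Set.range ι
  · obtain ⟨w, rfl⟩ := hz
    rw [Perm.viaEmbeddingHom_apply, Perm.viaEmbedding_apply]
    simp only [swap_apply_def, ι.injective.eq_iff]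
    split_ifs <;> rfl
  · have hx : z ≠ ι x := fun h => hz ⟨x, h.symm⟩
    have hy : z ≠ ι y := fun h => hz ⟨y, h.symm⟩
    rw [Perm.viaEmbeddingHom_apply, Perm.viaEmbedding_apply_of_notMem _ _ _ hz,
      swap_apply_of_ne_of_ne hx hy]

theorem Representation.even_finrank_eigenspace_neg_one_swap_mul_swap {K V : Type*} [Field K]
    [NeZero (2 : K)] [AddCommGroup V] [Module K V] [FiniteDimensional K V]
    (π : Representation K (Perm (Fin 4)) V) :
    Even (finrank K (eigenspace (π (swap 0 1 * swap 2 3)) (-1))) := by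
  have hτ : (swap 0 2 * swap 1 3 : Perm (Fin 4)) * (swap 0 2 * swap 1 3) = 1 := by decide
  have hστ : (swap 0 1 * swap 2 3 : Perm (Fin 4)) * (swap 0 2 * swap 1 3) =
      swap 0 2 * swap 1 3 * (swap 0 1 * swap 2 3) := by decide
  have hσγ : (swap 0 1 * swap 2 3 : Perm (Fin 4)) * swap 2 3 =
      swap 2 3 * (swap 0 1 * swap 2 3) := by decide
  have hτγ : (swap 0 2 * swap 1 3 : Perm (Fin 4)) * swap 2 3 =
      swap 2 3 * (swap 0 1 * swap 2 3 * (swap 0 2 * swap 1 3)) := by decide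
  refine even_finrank_eigenspace_neg_one (B := π (swap 0 2 * swap 1 3)) (C := π (swap 2 3))
    ?_ ?_ ((isUnit_iff _).mp ((Group.isUnit _).map π)).injective ?_ ?_
  · rw [← map_mul, hτ, map_one]
  · exact Commute.map hστ π
  · exact Commute.map hσγ π
  · rw [← map_mul, ← map_mul, ← map_mul, hτγ]

/-- For a real representation `π` of `Sₙ` (`n ≥ 4`), the multiplicity of `−1` as an
eigenvalue of `π((1 2)(3 4))` is even; equivalently `4 ∣ χ_π(1) − χ_π((1 2)(3 4))`. -/
theorem even_neg_one_multiplicity_symmetricGroup {n : ℕ} (hn : 4 ≤ n)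
    {V : Type*} [AddCommGroup V] [Module ℝ V] [FiniteDimensional ℝ V]
    (π : Representation ℝ (Equiv.Perm (Fin n)) V) :
    Even (Module.finrank ℝ
        (Module.End.eigenspace (π (Equiv.swap (⟨0, by omega⟩ : Fin n) ⟨1, by omega⟩ *
          Equiv.swap (⟨2, by omega⟩ : Fin n) ⟨3, by omega⟩)) (-1))) ∧
      ∃ k : ℤ, LinearMap.trace ℝ V (π 1) -
          LinearMap.trace ℝ V (π (Equiv.swap (⟨0, by omega⟩ : Fin n) ⟨1, by omega⟩ *
            Equiv.swap (⟨2, by omega⟩ : Fin n) ⟨3, by omega⟩)) = 4 * k := by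
  set ι := Perm.viaEmbeddingHom (Fin.castLEEmb hn)
  have hσ : ι (swap 0 1 * swap 2 3) = swap (⟨0, by omega⟩ : Fin n) ⟨1, by omega⟩ *
      swap (⟨2, by omega⟩ : Fin n) ⟨3, by omega⟩ := by
    simp only [ι, map_mul, Perm.viaEmbeddingHom_swap]
    rfl
  have hσσ : π (ι (swap 0 1 * swap 2 3)) * π (ι (swap 0 1 * swap 2 3)) = 1 := by
    rw [← map_mul, ← map_mul, (by decide : (swap 0 1 * swap 2 3 : Perm (Fin 4)) *
      (swap 0 1 * swap 2 3) = 1), map_one, map_one]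
  obtain ⟨r, hr⟩ := Representation.even_finrank_eigenspace_neg_one_swap_mul_swap (π.comp ι)
  rw [MonoidHom.comp_apply] at hr
  rw [← hσ, map_one, trace_one_sub_eq_two_mul_finrank_eigenspace_neg_one hσσ, hr]
  exact ⟨⟨r, rfl⟩, r, by push_cast; ring⟩
end

section
/- For n ≥ 2, the standard representation of the symmetric group S_n, i.e., the orthogonal representation of S_n on the Euclidean space ℝ^n in which each σ ∈ S_n permutes the standard basis vectors (sending e_i to e_{σ(i)}), is not spinorial. -/
/-- The quadratic form `v ↦ -‖v‖²` on a real inner product space. -/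
noncomputable def negInnerQ (V : Type*) [NormedAddCommGroup V] [InnerProductSpace ℝ V] :
    QuadraticForm ℝ V :=
  -(LinearMap.BilinMap.toQuadraticMap (innerₗ V : LinearMap.BilinForm ℝ V))

/-- `πhat` is a lift of the orthogonal representation `π` to the Pin group:
`α(π̂(g)) · ι(v) · π̂(g)⁻¹ = ι(π(g)(v))` for all `g` and `v`. -/
def IsLift {G V : Type*} [Group G] [NormedAddCommGroup V] [InnerProductSpace ℝ V]
    (π : G →* (V ≃ₗᵢ[ℝ] V)) (πhat : G →* pinGroup (negInnerQ V)) : Prop :=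
  ∀ (g : G) (v : V),
    CliffordAlgebra.involute ((πhat g : pinGroup (negInnerQ V)) : CliffordAlgebra (negInnerQ V)) *
        CliffordAlgebra.ι (negInnerQ V) v *
        (((πhat g)⁻¹ : pinGroup (negInnerQ V)) : CliffordAlgebra (negInnerQ V)) =
      CliffordAlgebra.ι (negInnerQ V) (π g v)

/-- An orthogonal representation is spinorial if it lifts to the Pin group. -/
def IsSpinorial {G V : Type*} [Group G] [NormedAddCommGroup V] [InnerProductSpace ℝ V]
    (π : G →* (V ≃ₗᵢ[ℝ] V)) : Prop :=
  ∃ πhat : G →* pinGroup (negInnerQ V), IsLift π πhat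

/-!
The transposition `τ = (0 1)` acts as the reflection in `w = e₀ - e₁`, and a lift `x = π̂(τ)`
satisfies `x² = 1` because `τ² = 1`. Twisted conjugation by `ι(w)` is the same reflection, so
`ι(w) x` twisted-commutes with every vector. In a nondegenerate Clifford algebra over a field of
characteristic zero such elements are scalars: the identity `ι v · x = α(x) · ι v + (polar v)⌋x`
makes them killed by every contraction, and transported to the exterior algebra, the number
operator `∑ eᵢ ∧ (eᵢ* ⌋ ·)`, which is `k` on `k`-vectors, shows that only scalars are. Hence
`x = s • ι(w)` and `x² = -2 s² ≠ 1`.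
-/

namespace CliffordAlgebra

variable {R M : Type*} [CommRing R] [AddCommGroup M] [Module R M] {Q : QuadraticForm R M}

theorem ι_mul_eq_involute_mul_add_contractLeft (v : M) (x : CliffordAlgebra Q) :
    ι Q v * x = involute x * ι Q v + contractLeft (QuadraticMap.polarBilin Q v) x := by
  induction x using CliffordAlgebra.left_induction with
  | algebraMap r => simp [Algebra.commutes]
  | add x y hx hy => rw [mul_add, hx, hy, map_add, map_add, add_mul]; abel
  | ι_mul x m hx =>
    have hswap : ι Q v * ι Q m = algebraMap R _ (QuadraticMap.polar Q v m) - ι Q m * ι Q v :=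
      eq_sub_of_add_eq (ι_mul_ι_add_swap v m)
    rw [← mul_assoc, hswap, sub_mul, mul_assoc, hx, map_mul, involute_ι, contractLeft_ι_mul,
      QuadraticMap.polarBilin_apply_apply, Algebra.smul_def]
    noncomm_ring

end CliffordAlgebra

namespace ExteriorAlgebra

open CliffordAlgebra

variable {R M : Type*} [CommRing R] [AddCommGroup M] [Module R M]
variable {κ : Type*} [Fintype κ] (b : Module.Basis κ R M)

noncomputable def numberOp : Module.End R (ExteriorAlgebra R M) :=
  ∑ i, LinearMap.mulLeft R (ι R (b i)) ∘ₗ contractLeft (b.coord i)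

theorem numberOp_apply (x : ExteriorAlgebra R M) :
    numberOp b x = ∑ i, ι R (b i) * contractLeft (b.coord i) x := by
  simp [numberOp]

theorem numberOp_algebraMap (r : R) : numberOp b (algebraMap R _ r) = 0 := by
  simp [numberOp_apply]

theorem numberOp_ι_mul (v : M) (x : ExteriorAlgebra R M) :
    numberOp b (ι R v * x) = ι R v * x + ι R v * numberOp b x := by
  have hterm : ∀ i, ι R (b i) * contractLeft (b.coord i) (ι R v * x) =
      (b.coord i v • ι R (b i)) * x + ι R v * (ι R (b i) * contractLeft (b.coord i) x) := by
    intro i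
    have hanti : ι R (b i) * ι R v = -(ι R v * ι R (b i)) :=
      eq_neg_of_add_eq_zero_left (ι_add_mul_swap _ _)
    rw [contractLeft_ι_mul, mul_sub, mul_smul_comm, smul_mul_assoc, ← mul_assoc, hanti,
      neg_mul, mul_assoc, sub_neg_eq_add]
  rw [numberOp_apply, Finset.sum_congr rfl fun i _ => hterm i, Finset.sum_add_distrib,
    ← Finset.sum_mul, ← Finset.mul_sum, ← numberOp_apply]
  simp_rw [← map_smul, ← map_sum, Module.Basis.coord_apply, b.sum_repr]

theorem ι_mul_mem_eigenspace_numberOp {μ : R} {x : ExteriorAlgebra R M}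
    (hx : x ∈ (numberOp b).eigenspace μ) (m : M) :
    ι R m * x ∈ (numberOp b).eigenspace (μ + 1) := by
  rw [Module.End.mem_eigenspace_iff] at hx ⊢
  rw [numberOp_ι_mul, hx, mul_smul_comm, add_smul, one_smul, add_comm]

theorem algebraMap_mem_eigenspace_numberOp (r : R) :
    algebraMap R (ExteriorAlgebra R M) r ∈ (numberOp b).eigenspace 0 := by
  rw [Module.End.mem_eigenspace_iff, numberOp_algebraMap, zero_smul]

theorem mem_range_algebraMap_sup_iSup_eigenspace_numberOp (x : ExteriorAlgebra R M) :
    x ∈ LinearMap.range (Algebra.linearMap R (ExteriorAlgebra R M)) ⊔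
      ⨆ k : ℕ, (numberOp b).eigenspace ((k : R) + 1) := by
  set E := ⨆ k : ℕ, (numberOp b).eigenspace ((k : R) + 1)
  have hE : ∀ m : M, E ≤ E.comap (LinearMap.mulLeft R (ι R m)) := fun m =>
    iSup_le fun k _ hz => Submodule.mem_iSup_of_mem (k + 1) <| by
      simpa only [Nat.cast_succ, Submodule.mem_comap, LinearMap.mulLeft_apply] using
        ι_mul_mem_eigenspace_numberOp b hz m
  induction x using CliffordAlgebra.left_induction with
  | algebraMap r => exact Submodule.mem_sup_left ⟨r, rfl⟩
  | add x y hx hy => exact add_mem hx hy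
  | ι_mul x m hx =>
    obtain ⟨_, ⟨r, rfl⟩, z, hz, rfl⟩ := Submodule.mem_sup.mp hx
    refine Submodule.mem_sup_right (mul_add (ι R m) _ z ▸ add_mem ?_ (hE m hz))
    refine Submodule.mem_iSup_of_mem 0 ?_
    simpa only [Nat.cast_zero, Algebra.linearMap_apply] using
      ι_mul_mem_eigenspace_numberOp b (algebraMap_mem_eigenspace_numberOp b r) m

variable {K V : Type*} [Field K] [CharZero K] [AddCommGroup V] [Module K V]

theorem exists_algebraMap_eq_of_numberOp_eq_zero (b : Module.Basis κ K V)
    {y : ExteriorAlgebra K V} (hy : numberOp b y = 0) : ∃ r, algebraMap K _ r = y := by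
  obtain ⟨_, ⟨r, rfl⟩, z, hz, hsum⟩ :=
    Submodule.mem_sup.mp (mem_range_algebraMap_sup_iSup_eigenspace_numberOp b y)
  refine ⟨r, ?_⟩
  have hz₀ : z ∈ (numberOp b).eigenspace 0 := by
    rw [Module.End.mem_eigenspace_iff, zero_smul, ← add_sub_cancel_left _ z, hsum, map_sub, hy,
      Algebra.linearMap_apply, numberOp_algebraMap, sub_zero]
  have hle : ⨆ k : ℕ, (numberOp b).eigenspace ((k : K) + 1) ≤
      ⨆ (μ : K) (_ : μ ≠ 0), (numberOp b).eigenspace μ :=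
    iSup_le fun k => le_iSup₂_of_le _ (Nat.cast_add_one_ne_zero k) le_rfl
  rw [← hsum, Submodule.disjoint_def.mp ((numberOp b).eigenspaces_iSupIndep 0) z hz₀ (hle hz),
    add_zero, Algebra.linearMap_apply]

theorem exists_algebraMap_eq_of_contractLeft_eq_zero [FiniteDimensional K V]
    {y : ExteriorAlgebra K V} (hy : ∀ d : Module.Dual K V, contractLeft d y = 0) :
    ∃ r, algebraMap K _ r = y :=
  exists_algebraMap_eq_of_numberOp_eq_zero (Module.finBasis K V) <| by simp [numberOp_apply, hy]

end ExteriorAlgebra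

namespace CliffordAlgebra

variable {K V : Type*} [Field K] [CharZero K] [AddCommGroup V] [Module K V] [FiniteDimensional K V]
  {Q : QuadraticForm K V}

theorem exists_algebraMap_eq_of_contractLeft_eq_zero {x : CliffordAlgebra Q}
    (hx : ∀ d : Module.Dual K V, contractLeft d x = 0) : ∃ r, algebraMap K _ r = x := by
  have : Invertible (2 : K) := invertibleOfNonzero two_ne_zero
  obtain ⟨r, hr⟩ := ExteriorAlgebra.exists_algebraMap_eq_of_contractLeft_eq_zero
    (y := equivExterior Q x) fun d => by
      rw [equivExterior, changeFormEquiv_apply, ← changeForm_contractLeft, hx, map_zero]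
  refine ⟨r, (equivExterior Q).injective ?_⟩
  rw [← hr, equivExterior, changeFormEquiv_apply, changeForm_algebraMap]

theorem exists_algebraMap_eq_of_involute_mul_ι_eq
    (hQ : (QuadraticMap.polarBilin Q).Nondegenerate) {x : CliffordAlgebra Q}
    (hx : ∀ v, involute x * ι Q v = ι Q v * x) : ∃ r, algebraMap K _ r = x := by
  refine exists_algebraMap_eq_of_contractLeft_eq_zero fun d => ?_
  obtain ⟨v, rfl⟩ := (LinearMap.BilinForm.toDual _ hQ).surjective d
  have h := ι_mul_eq_involute_mul_add_contractLeft v x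
  rwa [hx v, left_eq_add] at h

end CliffordAlgebra

section NegInnerQ

open CliffordAlgebra

variable {V : Type*} [NormedAddCommGroup V] [InnerProductSpace ℝ V]

theorem negInnerQ_apply (v : V) : negInnerQ V v = -‖v‖ ^ 2 := by
  simp [negInnerQ]

theorem polar_negInnerQ (v w : V) :
    QuadraticMap.polar (negInnerQ V) v w = -(2 * inner ℝ v w) := by
  simp only [QuadraticMap.polar, negInnerQ_apply, ← real_inner_self_eq_norm_sq,
    real_inner_add_add_self]
  ring

theorem polarBilin_negInnerQ_nondegenerate :
    (QuadraticMap.polarBilin (negInnerQ V)).Nondegenerate :=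
  ⟨fun v hv => by simpa [polar_negInnerQ, negInnerQ_apply] using hv v,
    fun v hv => by simpa [polar_negInnerQ, negInnerQ_apply] using hv v⟩

theorem ι_mul_ι_add_ι_mul_ι_reflection (v w : V) :
    ι (negInnerQ V) v * ι (negInnerQ V) w +
      ι (negInnerQ V) w * ι (negInnerQ V) ((ℝ ∙ w)ᗮ.reflection v) = 0 := by
  have hscalar : QuadraticMap.polar (negInnerQ V) v w -
      (2 * (inner ℝ w v / ‖w‖ ^ 2)) * negInnerQ V w = 0 := by
    rw [polar_negInnerQ, negInnerQ_apply, real_inner_comm]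
    rcases eq_or_ne w 0 with rfl | hw
    · simp
    · field_simp
      ring
  have hrefl : (ℝ ∙ w)ᗮ.reflection v = v - (2 * (inner ℝ w v / ‖w‖ ^ 2)) • w := by
    rw [Submodule.reflection_orthogonal_apply, Submodule.reflection_singleton_apply]
    module
  calc ι (negInnerQ V) v * ι _ w + ι _ w * ι _ ((ℝ ∙ w)ᗮ.reflection v)
      = (ι (negInnerQ V) v * ι _ w + ι _ w * ι _ v) -
          (2 * (inner ℝ w v / ‖w‖ ^ 2)) • (ι (negInnerQ V) w * ι _ w) := by
        rw [hrefl, map_sub, map_smul, mul_sub, mul_smul_comm]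
        abel
    _ = 0 := by
        rw [ι_mul_ι_add_swap, ι_sq_scalar, Algebra.smul_def, ← map_mul, ← map_sub, hscalar,
          map_zero]

theorem exists_eq_smul_ι_of_involute_mul_ι_eq_reflection [FiniteDimensional ℝ V] {w : V}
    {x : CliffordAlgebra (negInnerQ V)}
    (hx : ∀ v, involute x * ι _ v = ι _ ((ℝ ∙ w)ᗮ.reflection v) * x) (hw : w ≠ 0) :
    ∃ s : ℝ, x = s • ι _ w := by
  obtain ⟨r, hr⟩ := exists_algebraMap_eq_of_involute_mul_ι_eq polarBilin_negInnerQ_nondegenerate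
    (x := ι _ w * x) fun v => by
      rw [map_mul, involute_ι, neg_mul, neg_mul, mul_assoc, hx, ← mul_assoc, ← mul_assoc,
        eq_neg_of_add_eq_zero_left (ι_mul_ι_add_ι_mul_ι_reflection v w), neg_mul]
  have hQw : negInnerQ V w ≠ 0 := by simpa [negInnerQ_apply] using hw
  have hsmul : negInnerQ V w • x = r • ι _ w := by
    rw [Algebra.smul_def, ← ι_sq_scalar, mul_assoc, ← hr, Algebra.smul_def, Algebra.commutes]
  refine ⟨(negInnerQ V w)⁻¹ * r, ?_⟩
  rw [mul_smul, ← hsmul, smul_smul, inv_mul_cancel₀ hQw, one_smul]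

theorem IsLift.apply_ne_reflection [FiniteDimensional ℝ V] {G : Type*} [Group G]
    {π : G →* (V ≃ₗᵢ[ℝ] V)} {πhat : G →* pinGroup (negInnerQ V)} (hlift : IsLift π πhat)
    {g : G} (hg : g * g = 1) {w : V} (hw : w ≠ 0) : π g ≠ (ℝ ∙ w)ᗮ.reflection := by
  intro hπg
  have hpin : πhat g * πhat g = 1 := by rw [← map_mul, hg, map_one]
  set x := ((πhat g : pinGroup (negInnerQ V)) : CliffordAlgebra (negInnerQ V))
  have hx : x * x = 1 := congrArg Subtype.val hpin
  have htwist : ∀ v, involute x * ι _ v = ι _ ((ℝ ∙ w)ᗮ.reflection v) * x := fun v => by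
    rw [← hπg, ← hlift g v, inv_eq_of_mul_eq_one_right hpin, mul_assoc, hx, mul_one]
  obtain ⟨s, hs⟩ := exists_eq_smul_ι_of_involute_mul_ι_eq_reflection htwist hw
  -- gives `Nontrivial (CliffordAlgebra _)`, hence injectivity of `algebraMap`
  have : Invertible (2 : ℝ) := invertibleOfNonzero two_ne_zero
  rw [hs, smul_mul_smul_comm, ι_sq_scalar, Algebra.smul_def, ← map_mul,
    ← map_one (algebraMap ℝ _),
    (algebraMap ℝ (CliffordAlgebra (negInnerQ V))).injective.eq_iff, negInnerQ_apply] at hx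
  nlinarith [sq_nonneg s, sq_nonneg ‖w‖]

end NegInnerQ

theorem EuclideanSpace.eq_reflection_of_apply_single_eq_swap {ι : Type*} [Fintype ι]
    [DecidableEq ι] (i j : ι)
    {f : EuclideanSpace ℝ ι ≃ₗᵢ[ℝ] EuclideanSpace ℝ ι}
    (hf : ∀ k, f (EuclideanSpace.single k 1) = EuclideanSpace.single (Equiv.swap i j k) 1) :
    f = (ℝ ∙ (EuclideanSpace.single i 1 - EuclideanSpace.single j 1))ᗮ.reflection := by
  set K := (ℝ ∙ (EuclideanSpace.single i 1 - EuclideanSpace.single j (1 : ℝ)))ᗮ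
  have hi : K.reflection (EuclideanSpace.single i 1) = EuclideanSpace.single j 1 :=
    Submodule.reflection_sub (by simp)
  have hj : K.reflection (EuclideanSpace.single j 1) = EuclideanSpace.single i 1 :=
    (congrArg K.reflection hi).symm.trans (K.reflection_reflection _)
  refine LinearIsometryEquiv.toLinearEquiv_injective <|
    (EuclideanSpace.basisFun ι ℝ).toBasis.ext' fun k => ?_
  simp only [OrthonormalBasis.coe_toBasis, EuclideanSpace.basisFun_apply,
    LinearIsometryEquiv.coe_toLinearEquiv, hf]
  by_cases hki : k = i
  · rw [hki, Equiv.swap_apply_left, hi]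
  by_cases hkj : k = j
  · rw [hkj, Equiv.swap_apply_right, hj]
  rw [Equiv.swap_apply_of_ne_of_ne hki hkj, eq_comm]
  refine Submodule.reflection_mem_subspace_eq_self <|
    Submodule.mem_orthogonal_singleton_iff_inner_right.mpr ?_
  simp [inner_sub_left, EuclideanSpace.inner_single_left, hki, hkj]

/-- For `n ≥ 2`, the standard representation of `Sₙ` on `ℝⁿ`
(permuting the standard basis vectors) is not spinorial. -/
theorem standard_representation_not_spinorial {n : ℕ} (hn : 2 ≤ n)
    (π : Equiv.Perm (Fin n) →* (EuclideanSpace ℝ (Fin n) ≃ₗᵢ[ℝ] EuclideanSpace ℝ (Fin n)))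
    (hπ : ∀ (g : Equiv.Perm (Fin n)) (i : Fin n),
      π g (EuclideanSpace.single i (1 : ℝ)) = EuclideanSpace.single (g i) (1 : ℝ)) :
    ¬ IsSpinorial π := by
  rintro ⟨πhat, hlift⟩
  let i : Fin n := ⟨0, by omega⟩
  let j : Fin n := ⟨1, by omega⟩
  have hij : i ≠ j := by simp [i, j, Fin.ext_iff]
  have hw : EuclideanSpace.single i (1 : ℝ) - EuclideanSpace.single j 1 ≠ 0 :=
    sub_ne_zero.mpr fun h => hij (EuclideanSpace.orthonormal_single.linearIndependent.injective h)
  exact hlift.apply_ne_reflection (Equiv.swap_mul_self i j) hw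
    (EuclideanSpace.eq_reflection_of_apply_single_eq_swap i j (hπ _))
end
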